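/- Let H be a complex Hilbert space and A a bounded normal operator on H that is invertible in the algebra of bounded operators and whose spectrum contains no negative real number. Let I be a countable index set, let g : I → H be a Bessel family, and let L > 0. Then {A^t g_i : i ∈ I, t ∈ [0, L]} is a semi-continuous frame for H (there exist 0 < c ≤ C with c‖f‖² ≤ ∑_{i∈I} ∫₀ᴸ |⟨f, A^t g_i⟩|² dt ≤ C‖f‖² for all f ∈ H) if and only if there exist n ≥ 1 and real numbers 0 = t₁ < t₂ < ⋯ < t_n < L such that the discrete system {A^{t_k} g_i : 1 ≤ k ≤ n, i ∈ I} is a frame for H (there exist 0 < c' ≤ C' with c'‖f‖² ≤ ∑_{i∈I} ∑_{k=1}^n |⟨f, A^{t_k} g_i⟩|² ≤ C'‖f‖² for all f ∈ H). -/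

import Mathlib

/-!
Let `Θ h = (⟪g i, h⟫)ᵢ ∈ ℓ²` be the analysis operator of the Bessel family and
`R s = Θ ∘ (A^s)†`, so that `∑ᵢ |⟪f, A^s gᵢ⟫|² = ‖R s f‖²`. As the spectrum of `A` lies in the
slit plane, `(s, z) ↦ z^s` is uniformly continuous on `[0, L] × σ(A)`, so `s ↦ R s` is norm
continuous on `[0, L]` and `‖R s f‖²` varies by at most `ε ‖f‖²` over `s`-intervals of length `δ`,
uniformly in `f`. Hence on a fine equally spaced grid the integral `∫₀ᴸ ‖R s f‖² ds` is at most
the Riemann sum plus `(c / 2) ‖f‖²`, and a lower frame bound passes to the samples; conversely, a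
discrete frame at the times `t_k` bounds the integral over the disjoint short intervals
`[t_k, t_k + δ]` from below. Upper bounds hold on both sides by compactness.

The Bessel hypothesis is stated with `tsum`, which is `0` on a divergent series, so summability
of `(|⟪h, gᵢ⟫|²)ᵢ` must be recovered from the lower frame bounds: in the discrete case from the
time `t₀ = 0`, where `A⁰ = 1`; in the continuous case from summability at `(A^s)† h` for almost
every `s`, letting `s → 0`, since summability is a closed condition on `h`.
-/

open scoped InnerProductSpace InnerProduct lp
open Set MeasureTheory Filter Topology

def HasFrameBounds {V : Type*} [Norm V] (Φ : V → ℝ) : Prop :=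
  ∃ c C : ℝ, 0 < c ∧ c ≤ C ∧ ∀ f, c * ‖f‖ ^ 2 ≤ Φ f ∧ Φ f ≤ C * ‖f‖ ^ 2

theorem hasFrameBounds_iff_of_le {V : Type*} [Norm V] {Φ : V → ℝ} {C : ℝ}
    (hC : ∀ f, Φ f ≤ C * ‖f‖ ^ 2) :
    HasFrameBounds Φ ↔ ∃ c > 0, ∀ f, c * ‖f‖ ^ 2 ≤ Φ f := by
  refine ⟨fun ⟨c, _, hc, _, h⟩ => ⟨c, hc, fun f => (h f).1⟩, fun ⟨c, hc, h⟩ => ?_⟩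
  refine ⟨c, max c C, hc, le_max_left _ _, fun f => ⟨h f, (hC f).trans ?_⟩⟩
  gcongr
  exact le_max_right _ _

theorem abs_intervalIntegral_sub_mul_le {ψ : ℝ → ℝ} {a b y e : ℝ} (hab : a ≤ b)
    (hψ : IntervalIntegrable ψ volume a b) (h : ∀ s ∈ Icc a b, |ψ s - y| ≤ e) :
    |(∫ s in a..b, ψ s) - (b - a) * y| ≤ (b - a) * e := by
  have hsub : (∫ s in a..b, ψ s) - (b - a) * y = ∫ s in a..b, (ψ s - y) := by
    rw [intervalIntegral.integral_sub hψ intervalIntegrable_const, intervalIntegral.integral_const,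
      smul_eq_mul]
  rw [hsub, mul_comm, ← abs_of_nonneg (sub_nonneg.2 hab)]
  refine intervalIntegral.norm_integral_le_of_norm_le_const (f := fun s => ψ s - y) fun s hs => ?_
  rw [uIoc_of_le hab] at hs
  exact (Real.norm_eq_abs _).trans_le (h s (Ioc_subset_Icc_self hs))

section ContinuousFamily

variable {𝕜 V E : Type*} [NontriviallyNormedField 𝕜] [NormedAddCommGroup V] [NormedSpace 𝕜 V]
  [NormedAddCommGroup E] [NormedSpace 𝕜 E]

theorem ContinuousLinearMap.abs_norm_sq_apply_sub_norm_sq_apply_le (B C : V →L[𝕜] E) (f : V) :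
    |‖B f‖ ^ 2 - ‖C f‖ ^ 2| ≤ ‖B - C‖ * (‖B‖ + ‖C‖) * ‖f‖ ^ 2 := by
  have hsub : |‖B f‖ - ‖C f‖| ≤ ‖B - C‖ * ‖f‖ :=
    (abs_norm_sub_norm_le _ _).trans ((B - C).le_opNorm f)
  have hadd : ‖B f‖ + ‖C f‖ ≤ (‖B‖ + ‖C‖) * ‖f‖ := by
    rw [add_mul]; exact add_le_add (B.le_opNorm f) (C.le_opNorm f)
  calc |‖B f‖ ^ 2 - ‖C f‖ ^ 2| = |‖B f‖ - ‖C f‖| * (‖B f‖ + ‖C f‖) := by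
        rw [sq_sub_sq, abs_mul, abs_of_nonneg (by positivity : 0 ≤ ‖B f‖ + ‖C f‖), mul_comm]
    _ ≤ (‖B - C‖ * ‖f‖) * ((‖B‖ + ‖C‖) * ‖f‖) := by gcongr
    _ = ‖B - C‖ * (‖B‖ + ‖C‖) * ‖f‖ ^ 2 := by ring

variable {R : ℝ → V →L[𝕜] E} {a b L : ℝ}

theorem ContinuousOn.exists_norm_sq_apply_le (hR : ContinuousOn R (Icc a b)) :
    ∃ M, ∀ s ∈ Icc a b, ∀ f, ‖R s f‖ ^ 2 ≤ M * ‖f‖ ^ 2 := by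
  obtain ⟨M, hM⟩ := isCompact_Icc.exists_bound_of_continuousOn hR
  refine ⟨M ^ 2, fun s hs f => ?_⟩
  rw [← mul_pow]
  gcongr
  exact ((R s).le_opNorm f).trans (by gcongr; exact hM s hs)

theorem ContinuousOn.exists_abs_norm_sq_apply_sub_le (hR : ContinuousOn R (Icc a b)) {ε : ℝ}
    (hε : 0 < ε) : ∃ δ > 0, ∀ s ∈ Icc a b, ∀ u ∈ Icc a b, |s - u| ≤ δ →
      ∀ f, |‖R s f‖ ^ 2 - ‖R u f‖ ^ 2| ≤ ε * ‖f‖ ^ 2 := by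
  obtain ⟨M, hM⟩ := isCompact_Icc.exists_bound_of_continuousOn hR
  set η := ε / (2 * |M| + 1)
  obtain ⟨δ, hδ, hRδ⟩ := Metric.uniformContinuousOn_iff_le.1
    (isCompact_Icc.uniformContinuousOn_of_continuous hR) η (by positivity)
  refine ⟨δ, hδ, fun s hs u hu hsu f => ?_⟩
  have hRsu : ‖R s - R u‖ ≤ η := by
    rw [← dist_eq_norm]; exact hRδ s hs u hu (by rwa [Real.dist_eq])
  have hRs : ‖R s‖ + ‖R u‖ ≤ 2 * |M| + 1 := by
    linarith [hM s hs, hM u hu, le_abs_self M]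
  calc |‖R s f‖ ^ 2 - ‖R u f‖ ^ 2| ≤ ‖R s - R u‖ * (‖R s‖ + ‖R u‖) * ‖f‖ ^ 2 :=
        (R s).abs_norm_sq_apply_sub_norm_sq_apply_le (R u) f
    _ ≤ η * (2 * |M| + 1) * ‖f‖ ^ 2 := by gcongr
    _ = ε * ‖f‖ ^ 2 := by rw [div_mul_cancel₀ _ (by positivity)]

theorem ContinuousOn.intervalIntegrable_norm_sq_apply (hR : ContinuousOn R (Icc a b)) (f : V)
    {x y : ℝ} (hx : x ∈ Icc a b) (hy : y ∈ Icc a b) :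
    IntervalIntegrable (fun s => ‖R s f‖ ^ 2) volume x y :=
  (((hR.clm_apply continuousOn_const).norm.pow 2).mono (uIcc_subset_Icc hx hy)).intervalIntegrable

theorem ContinuousOn.exists_lower_bound_sum_of_integral (hR : ContinuousOn R (Icc 0 L))
    (hL : 0 < L) {c : ℝ} (hc : 0 < c) (hlow : ∀ f, c * ‖f‖ ^ 2 ≤ ∫ s in (0 : ℝ)..L, ‖R s f‖ ^ 2) :
    ∃ n : ℕ, 1 ≤ n ∧ ∃ c' > 0, ∀ f,
      c' * ‖f‖ ^ 2 ≤ ∑ k ∈ Finset.range n, ‖R (k * (L / n)) f‖ ^ 2 := by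
  obtain ⟨δ, hδ, hRδ⟩ := hR.exists_abs_norm_sq_apply_sub_le (ε := c / (2 * L)) (by positivity)
  obtain ⟨n, hn⟩ := exists_nat_gt (L / δ)
  have hn0 : (0 : ℝ) < n := (div_pos hL hδ).trans hn
  set Δ := L / n
  have hΔ : 0 < Δ := div_pos hL hn0
  have hΔδ : Δ ≤ δ := by
    rw [div_lt_iff₀ hδ] at hn
    exact (div_le_iff₀ hn0).2 (by linarith)
  have hnΔ : (n : ℝ) * Δ = L := mul_div_cancel₀ _ hn0.ne'
  have hmem : ∀ k ≤ n, (k * Δ : ℝ) ∈ Icc 0 L := fun k hk =>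
    ⟨by positivity, hnΔ ▸ by gcongr⟩
  refine ⟨n, (by exact_mod_cast hn0 : 0 < n), c / (2 * Δ), by positivity, fun f => ?_⟩
  set ψ := fun s => ‖R s f‖ ^ 2
  have hpiece : ∀ k ∈ Finset.range n, ∫ s in (k : ℝ) * Δ..((k + 1 : ℕ) : ℝ) * Δ, ψ s
      ≤ Δ * ψ (k * Δ) + Δ * (c / (2 * L) * ‖f‖ ^ 2) := by
    intro k hk
    rw [Finset.mem_range] at hk
    have hstep : ((k + 1 : ℕ) : ℝ) * Δ - k * Δ = Δ := by push_cast; ring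
    have hkΔ := hmem k hk.le
    have hk1Δ := hmem (k + 1) hk
    have := abs_intervalIntegral_sub_mul_le (y := ψ (k * Δ)) (by linarith)
      (hR.intervalIntegrable_norm_sq_apply f hkΔ hk1Δ) fun s hs =>
        hRδ s ⟨hkΔ.1.trans hs.1, hs.2.trans hk1Δ.2⟩ _ hkΔ
          (abs_le.2 ⟨by linarith [hs.1], by linarith [hs.2]⟩) f
    rw [hstep] at this
    linarith [(abs_le.1 this).2]
  have hsplit : ∫ s in (0 : ℝ)..L, ψ s
      = ∑ k ∈ Finset.range n, ∫ s in (k : ℝ) * Δ..((k + 1 : ℕ) : ℝ) * Δ, ψ s := by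
    rw [intervalIntegral.sum_integral_adjacent_intervals (a := fun k : ℕ => (k : ℝ) * Δ)
      fun k hk => hR.intervalIntegrable_norm_sq_apply f (hmem k hk.le) (hmem (k + 1) hk),
      Nat.cast_zero, zero_mul, hnΔ]
  have hriemann : c * ‖f‖ ^ 2 ≤ Δ * ∑ k ∈ Finset.range n, ψ (k * Δ) + c / 2 * ‖f‖ ^ 2 :=
    calc c * ‖f‖ ^ 2 ≤ ∫ s in (0 : ℝ)..L, ψ s := hlow f
      _ ≤ ∑ k ∈ Finset.range n, (Δ * ψ (k * Δ) + Δ * (c / (2 * L) * ‖f‖ ^ 2)) :=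
        hsplit ▸ Finset.sum_le_sum hpiece
      _ = Δ * ∑ k ∈ Finset.range n, ψ (k * Δ) + c / 2 * ‖f‖ ^ 2 := by
        rw [Finset.sum_add_distrib, ← Finset.mul_sum, Finset.sum_const, Finset.card_range,
          nsmul_eq_mul, ← mul_assoc, hnΔ]
        field_simp
  calc c / (2 * Δ) * ‖f‖ ^ 2 = c / 2 * ‖f‖ ^ 2 / Δ := by field_simp
    _ ≤ ∑ k ∈ Finset.range n, ψ (k * Δ) := by rw [div_le_iff₀ hΔ]; linarith

theorem mem_Ico_of_forall_lt_succ {t : ℕ → ℝ} {n : ℕ} (ht0 : t 0 = 0)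
    (ht : ∀ k, k + 1 < n → t k < t (k + 1)) (htL : t (n - 1) < L) {k : ℕ} (hk : k < n) :
    t k ∈ Ico 0 L := by
  have hmono : MonotoneOn t (Iic (n - 1)) :=
    (strictMonoOn_Iic_of_lt_succ fun m hm => by simpa using ht m (by omega)).monotoneOn
  refine ⟨ht0 ▸ hmono (by simp) (by simp; omega) (Nat.zero_le k), ?_⟩
  exact (hmono (by simp; omega) (by simp) (by omega)).trans_lt htL

theorem exists_partition_of_forall_lt_succ {t : ℕ → ℝ} {n : ℕ} (hn : 1 ≤ n) (ht0 : t 0 = 0)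
    (ht : ∀ k, k + 1 < n → t k < t (k + 1)) (htL : t (n - 1) < L) :
    ∃ u : ℕ → ℝ, ∃ δ > 0, u 0 = 0 ∧ u n = L ∧ (∀ k < n, u k = t k) ∧
      (∀ k ≤ n, u k ∈ Icc 0 L) ∧ ∀ k < n, δ ≤ u (k + 1) - u k := by
  set u : ℕ → ℝ := fun k => if k < n then t k else L
  have hu : ∀ k < n, u k < u (k + 1) := by
    intro k hk
    by_cases hk1 : k + 1 < n
    · simpa [u, hk, hk1] using ht k hk1
    · obtain rfl : k = n - 1 := by omega
      simpa [u, hk, hk1] using htL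
  refine ⟨u, (Finset.range n).inf' ⟨0, by simp; omega⟩ fun k => u (k + 1) - u k,
    (Finset.lt_inf'_iff _).2 fun k hk => sub_pos.2 (hu k (by simpa using hk)),
    by simp [u, ht0, (by omega : 0 < n)], by simp [u], fun k hk => if_pos hk, fun k hk => ?_,
    fun k hk => Finset.inf'_le _ (by simpa using hk)⟩
  rcases hk.lt_or_eq with hk | rfl
  · simpa [u, hk] using Ico_subset_Icc_self (mem_Ico_of_forall_lt_succ ht0 ht htL hk)
  · have ht0L := mem_Ico_of_forall_lt_succ ht0 ht htL (k := 0) (by omega)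
    simpa [u] using ht0L.1.trans ht0L.2.le

theorem ContinuousOn.mul_sub_le_integral_norm_sq (hR : ContinuousOn R (Icc 0 L)) {x y ρ e : ℝ}
    (hx : 0 ≤ x) (hρ : 0 ≤ ρ) (hxy : x + ρ ≤ y) (hy : y ≤ L) (f : V)
    (h : ∀ s ∈ Icc x (x + ρ), |‖R s f‖ ^ 2 - ‖R x f‖ ^ 2| ≤ e) :
    ρ * ‖R x f‖ ^ 2 - ρ * e ≤ ∫ s in x..y, ‖R s f‖ ^ 2 := by
  have hxL : x ∈ Icc 0 L := ⟨hx, by linarith⟩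
  have happrox := abs_intervalIntegral_sub_mul_le (le_add_of_nonneg_right hρ)
    (hR.intervalIntegrable_norm_sq_apply f hxL ⟨by linarith, hxy.trans hy⟩) h
  have hshorter := intervalIntegral.integral_mono_interval le_rfl (by linarith) hxy
    (ae_of_all _ fun s => sq_nonneg ‖R s f‖)
    (hR.intervalIntegrable_norm_sq_apply f hxL ⟨by linarith, hy⟩)
  rw [add_sub_cancel_left] at happrox
  linarith [(abs_le.1 happrox).1]

theorem ContinuousOn.exists_lower_bound_integral_of_sum (hR : ContinuousOn R (Icc 0 L)) {n : ℕ}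
    {t : ℕ → ℝ} (hn : 1 ≤ n) (ht0 : t 0 = 0) (ht : ∀ k, k + 1 < n → t k < t (k + 1))
    (htL : t (n - 1) < L) {c' : ℝ} (hc' : 0 < c')
    (hlow : ∀ f, c' * ‖f‖ ^ 2 ≤ ∑ k ∈ Finset.range n, ‖R (t k) f‖ ^ 2) :
    ∃ c > 0, ∀ f, c * ‖f‖ ^ 2 ≤ ∫ s in (0 : ℝ)..L, ‖R s f‖ ^ 2 := by
  obtain ⟨u, δ₁, hδ₁, hu0, hun, hut, hmem, hgap⟩ :=
    exists_partition_of_forall_lt_succ hn ht0 ht htL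
  obtain ⟨δ, hδ, hRδ⟩ := hR.exists_abs_norm_sq_apply_sub_le (ε := c' / (2 * n)) (by positivity)
  set ρ := min δ δ₁
  have hρ : 0 < ρ := lt_min hδ hδ₁
  refine ⟨ρ * c' / 2, by positivity, fun f => ?_⟩
  set ψ := fun s => ‖R s f‖ ^ 2
  have hpiece : ∀ k ∈ Finset.range n,
      ρ * ψ (t k) - ρ * (c' / (2 * n) * ‖f‖ ^ 2) ≤ ∫ s in u k..u (k + 1), ψ s := by
    intro k hk
    rw [Finset.mem_range] at hk
    have hρk : u k + ρ ≤ u (k + 1) := by linarith [hgap k hk, min_le_right δ δ₁]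
    have hukm := hmem k hk.le
    rw [← hut k hk]
    refine hR.mul_sub_le_integral_norm_sq hukm.1 hρ.le hρk (hmem (k + 1) hk).2 f fun s hs => ?_
    exact hRδ s ⟨hukm.1.trans hs.1, hs.2.trans (hρk.trans (hmem (k + 1) hk).2)⟩ (u k) hukm
      (abs_le.2 ⟨by linarith [hs.1], by linarith [hs.2, min_le_left δ δ₁]⟩) f
  have hsplit : ∫ s in (0 : ℝ)..L, ψ s = ∑ k ∈ Finset.range n, ∫ s in u k..u (k + 1), ψ s := by
    rw [intervalIntegral.sum_integral_adjacent_intervals fun k hk =>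
      hR.intervalIntegrable_norm_sq_apply f (hmem k hk.le) (hmem (k + 1) hk), hu0, hun]
  calc ρ * c' / 2 * ‖f‖ ^ 2
      = ρ * (c' * ‖f‖ ^ 2) - n * (ρ * (c' / (2 * n) * ‖f‖ ^ 2)) := by field_simp; ring
    _ ≤ ρ * ∑ k ∈ Finset.range n, ψ (t k) - n * (ρ * (c' / (2 * n) * ‖f‖ ^ 2)) := by
        gcongr; exact hlow f
    _ = ∑ k ∈ Finset.range n, (ρ * ψ (t k) - ρ * (c' / (2 * n) * ‖f‖ ^ 2)) := by
        rw [Finset.sum_sub_distrib, ← Finset.mul_sum, Finset.sum_const, Finset.card_range,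
          nsmul_eq_mul]
    _ ≤ ∫ s in (0 : ℝ)..L, ψ s := hsplit ▸ Finset.sum_le_sum hpiece

theorem ContinuousOn.hasFrameBounds_integral_iff (hR : ContinuousOn R (Icc 0 L)) (hL : 0 < L) :
    HasFrameBounds (fun f => ∫ s in (0 : ℝ)..L, ‖R s f‖ ^ 2) ↔
      ∃ (n : ℕ) (t : ℕ → ℝ), 1 ≤ n ∧ t 0 = 0 ∧ (∀ k, k + 1 < n → t k < t (k + 1)) ∧
        t (n - 1) < L ∧ HasFrameBounds (fun f => ∑ k ∈ Finset.range n, ‖R (t k) f‖ ^ 2) := by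
  obtain ⟨M, hM⟩ := hR.exists_norm_sq_apply_le
  have hintegral_le : ∀ f, ∫ s in (0 : ℝ)..L, ‖R s f‖ ^ 2 ≤ L * M * ‖f‖ ^ 2 := fun f => by
    refine (intervalIntegral.integral_mono_on hL.le
      (hR.intervalIntegrable_norm_sq_apply f ⟨le_rfl, hL.le⟩ ⟨hL.le, le_rfl⟩)
      intervalIntegrable_const fun s hs => hM s hs f).trans_eq ?_
    simp only [intervalIntegral.integral_const, smul_eq_mul, sub_zero, mul_assoc]
  have hsum_le : ∀ (n : ℕ) (t : ℕ → ℝ), (∀ k < n, t k ∈ Icc 0 L) →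
      ∀ f, ∑ k ∈ Finset.range n, ‖R (t k) f‖ ^ 2 ≤ n * M * ‖f‖ ^ 2 := fun n t ht f => by
    simpa [mul_assoc] using Finset.sum_le_sum fun k hk =>
      hM _ (ht k (Finset.mem_range.1 hk)) f
  rw [hasFrameBounds_iff_of_le hintegral_le]
  constructor
  · rintro ⟨c, hc, hlow⟩
    obtain ⟨n, hn, c', hc', hlow'⟩ := hR.exists_lower_bound_sum_of_integral hL hc hlow
    have hLn : 0 < L / n := div_pos hL (by exact_mod_cast hn)
    have ht : ∀ k, k + 1 < n → (k : ℝ) * (L / n) < ((k + 1 : ℕ) : ℝ) * (L / n) := fun k _ => by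
      gcongr; exact_mod_cast k.lt_succ_self
    have htL : ((n - 1 : ℕ) : ℝ) * (L / n) < L := by
      calc ((n - 1 : ℕ) : ℝ) * (L / n) < n * (L / n) := by
            gcongr; exact_mod_cast Nat.sub_lt hn one_pos
        _ = L := mul_div_cancel₀ _ (by positivity)
    refine ⟨n, fun k => k * (L / n), hn, by simp, ht, htL, ?_⟩
    rw [hasFrameBounds_iff_of_le (hsum_le n _ fun k hk =>
      Ico_subset_Icc_self (mem_Ico_of_forall_lt_succ (by simp) ht htL hk))]
    exact ⟨c', hc', hlow'⟩
  · rintro ⟨n, t, hn, ht0, ht, htL, hframe⟩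
    obtain ⟨c', C', hc', -, hlow⟩ := hframe
    exact hR.exists_lower_bound_integral_of_sum hn ht0 ht htL hc' fun f => (hlow f).1

end ContinuousFamily

theorem summable_of_tsum_ne_zero {ι α : Type*} [AddCommMonoid α] [TopologicalSpace α] {φ : ι → α}
    (h : ∑' i, φ i ≠ 0) : Summable φ := by
  by_contra hφ
  exact h (tsum_eq_zero_of_not_summable hφ)

theorem MeasureTheory.ae_summable_norm_of_summable_integral_norm {α ι E : Type*}
    [MeasurableSpace α] {μ : Measure α} [NormedAddCommGroup E] [Countable ι] {F : ι → α → E}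
    (hF : ∀ i, Integrable (F i) μ) (hsum : Summable fun i => ∫ a, ‖F i a‖ ∂μ) :
    ∀ᵐ a ∂μ, Summable fun i => ‖F i a‖ := by
  refine summable_norm_of_tsum_eLpNorm_ne_top le_rfl (fun i => (hF i).1) ?_
  simp_rw [eLpNorm_one_eq_lintegral_enorm, ← ofReal_integral_norm_eq_lintegral_enorm (hF _)]
  rw [← ENNReal.ofReal_tsum_of_nonneg (fun i => integral_nonneg fun _ => norm_nonneg _) hsum]
  exact ENNReal.ofReal_ne_top

theorem frequently_nhdsWithin_Ioo_of_ae {μ : Measure ℝ} [μ.IsOpenPosMeasure] {p : ℝ → Prop}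
    {a b : ℝ} (hab : a < b) (h : ∀ᵐ s ∂μ.restrict (Ioo a b), p s) :
    ∃ᶠ s in 𝓝[Ioo a b] a, p s := by
  rw [nhdsWithin_Ioo_eq_nhdsGT hab, Filter.frequently_iff]
  intro U hU
  obtain ⟨c, hc, hcU⟩ := mem_nhdsGT_iff_exists_Ioo_subset.1 hU
  have hsub : Ioo a (min b c) ⊆ Ioo a b := Ioo_subset_Ioo_right (min_le_left _ _)
  have := ae_restrict_neBot.2 ((Measure.measure_Ioo_pos μ).2 (lt_min hab hc)).ne'
  obtain ⟨s, hps, hs⟩ :=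
    ((ae_restrict_of_ae_restrict_of_subset hsub h).and (ae_restrict_mem measurableSet_Ioo)).exists
  exact ⟨s, hcU ⟨hs.1, hs.2.trans_le (min_le_right _ _)⟩, hps⟩

section Bessel

variable {H I : Type*} [NormedAddCommGroup H] [InnerProductSpace ℂ H] {g : I → H} {CB : ℝ}

/-- The Bessel bound says nothing about a divergent series (whose `tsum` is `0`), but it bounds
every finite partial sum of a convergent one: summability is an intersection of closed
conditions. -/
theorem isClosed_setOf_summable_norm_inner_sq
    (hCB : ∀ h : H, ∑' i, ‖⟪h, g i⟫_ℂ‖ ^ 2 ≤ CB * ‖h‖ ^ 2) :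
    IsClosed {h : H | Summable fun i => ‖⟪h, g i⟫_ℂ‖ ^ 2} := by
  have : {h : H | Summable fun i => ‖⟪h, g i⟫_ℂ‖ ^ 2}
      = ⋂ F : Finset I, {h | ∑ i ∈ F, ‖⟪h, g i⟫_ℂ‖ ^ 2 ≤ CB * ‖h‖ ^ 2} := by
    ext h
    rw [mem_iInter]
    exact ⟨fun hs F => (hs.sum_le_tsum F fun i _ => by positivity).trans (hCB h),
      summable_of_sum_le fun i => by positivity⟩
  rw [this]
  exact isClosed_iInter fun F => isClosed_le (by fun_prop) (by fun_prop)

theorem lp.norm_sq_eq_tsum {E : I → Type*} [∀ i, NormedAddCommGroup (E i)] (x : lp E 2) :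
    ‖x‖ ^ 2 = ∑' i, ‖x i‖ ^ 2 := by
  simpa using lp.norm_rpow_eq_tsum (p := 2) (by norm_num) x

noncomputable def analysisOp (g : I → H) (hG : ∀ h : H, Summable fun i => ‖⟪h, g i⟫_ℂ‖ ^ 2)
    (hCB : ∀ h : H, ∑' i, ‖⟪h, g i⟫_ℂ‖ ^ 2 ≤ CB * ‖h‖ ^ 2) : H →L[ℂ] ℓ²(I, ℂ) :=
  LinearMap.mkContinuous
    { toFun := fun h => ⟨fun i => ⟪g i, h⟫_ℂ, memℓp_gen (by simpa [norm_inner_symm] using hG h)⟩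
      map_add' := fun x y => Subtype.ext <| funext fun i => inner_add_right _ _ _
      map_smul' := fun a x => Subtype.ext <| funext fun i => inner_smul_right _ _ _ }
    (√CB) fun h => by
      rw [← Real.sqrt_sq (norm_nonneg _), ← Real.sqrt_sq (norm_nonneg h),
        ← Real.sqrt_mul' _ (sq_nonneg _)]
      refine Real.sqrt_le_sqrt ?_
      simpa [lp.norm_sq_eq_tsum, norm_inner_symm] using hCB h

theorem summable_norm_inner_apply_sq [CompleteSpace H]
    (hG : ∀ h : H, Summable fun i => ‖⟪h, g i⟫_ℂ‖ ^ 2) (B : H →L[ℂ] H) (f : H) :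
    Summable fun i => ‖⟪f, B (g i)⟫_ℂ‖ ^ 2 := by
  simpa [ContinuousLinearMap.adjoint_inner_left] using hG ((B†) f)

variable (hG : ∀ h : H, Summable fun i => ‖⟪h, g i⟫_ℂ‖ ^ 2)
  (hCB : ∀ h : H, ∑' i, ‖⟪h, g i⟫_ℂ‖ ^ 2 ≤ CB * ‖h‖ ^ 2)

theorem norm_analysisOp_apply_sq (h : H) :
    ‖analysisOp g hG hCB h‖ ^ 2 = ∑' i, ‖⟪h, g i⟫_ℂ‖ ^ 2 := by
  simp [analysisOp, lp.norm_sq_eq_tsum, norm_inner_symm]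

theorem norm_analysisOp_comp_adjoint_apply_sq [CompleteSpace H] (B : H →L[ℂ] H) (f : H) :
    ‖(analysisOp g hG hCB ∘L B†) f‖ ^ 2 = ∑' i, ‖⟪f, B (g i)⟫_ℂ‖ ^ 2 := by
  simp [norm_analysisOp_apply_sq, ContinuousLinearMap.adjoint_inner_left]

theorem ContinuousOn.analysisOp_comp_adjoint [CompleteSpace H] {T : ℝ → H →L[ℂ] H} {s : Set ℝ}
    (hT : ContinuousOn T s) : ContinuousOn (fun t => analysisOp g hG hCB ∘L (T t)†) s :=
  (ContinuousLinearMap.compL ℂ H H ℓ²(I, ℂ) (analysisOp g hG hCB)).continuous.comp_continuousOn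
    (ContinuousLinearMap.adjoint.continuous.comp_continuousOn hT)

theorem tsum_sum_norm_inner_sq_eq [CompleteSpace H] {κ : Type*} (s : Finset κ)
    (B : κ → H →L[ℂ] H) (f : H) :
    ∑' i, ∑ k ∈ s, ‖⟪f, B k (g i)⟫_ℂ‖ ^ 2 = ∑ k ∈ s, ‖(analysisOp g hG hCB ∘L (B k)†) f‖ ^ 2 := by
  simp only [norm_analysisOp_comp_adjoint_apply_sq]
  exact Summable.tsum_finsetSum fun k _ => summable_norm_inner_apply_sq hG (B k) f

theorem tsum_integral_norm_inner_sq_eq [CompleteSpace H] [Countable I] {T : ℝ → H →L[ℂ] H}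
    {L : ℝ} (hT : ContinuousOn T (Icc 0 L)) (hL : 0 ≤ L) (f : H) :
    ∑' i, ∫ s in (0 : ℝ)..L, ‖⟪f, T s (g i)⟫_ℂ‖ ^ 2
      = ∫ s in (0 : ℝ)..L, ‖(analysisOp g hG hCB ∘L (T s)†) f‖ ^ 2 := by
  have hsum : ContinuousOn (fun s => ∑' i, ‖⟪f, T s (g i)⟫_ℂ‖ ^ 2) (Icc 0 L) := by
    refine (((hT.analysisOp_comp_adjoint hG hCB).clm_apply
      (continuousOn_const (c := f))).norm.pow 2).congr fun s _ => ?_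
    exact (norm_analysisOp_comp_adjoint_apply_sq hG hCB (T s) f).symm
  have hterm (i : I) : ContinuousOn (fun s => ‖⟪f, T s (g i)⟫_ℂ‖ ^ 2) (Icc 0 L) :=
    (continuousOn_const.inner (hT.clm_apply continuousOn_const)).norm.pow 2
  simp only [norm_analysisOp_comp_adjoint_apply_sq, intervalIntegral.integral_of_le hL]
  exact (hasSum_integral_of_dominated_convergence (fun i s => ‖⟪f, T s (g i)⟫_ℂ‖ ^ 2)
    (fun i => ((hterm i).mono Ioc_subset_Icc_self).aestronglyMeasurable measurableSet_Ioc)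
    (fun i => ae_of_all _ fun s => (Real.norm_of_nonneg (by positivity)).le)
    (ae_of_all _ fun s => summable_norm_inner_apply_sq hG _ f)
    (hsum.integrableOn_Icc.mono_set Ioc_subset_Icc_self)
    (ae_of_all _ fun s => (summable_norm_inner_apply_sq hG _ f).hasSum)).tsum_eq

variable {T : ℝ → H →L[ℂ] H} {L : ℝ}

theorem summable_norm_inner_sq_of_sum_lower_bound (hT0 : T 0 = 1) {n : ℕ} {t : ℕ → ℝ}
    (hn : 1 ≤ n) (ht0 : t 0 = 0) {c : ℝ} (hc : 0 < c)
    (hlow : ∀ f, c * ‖f‖ ^ 2 ≤ ∑' i, ∑ k ∈ Finset.range n, ‖⟪f, T (t k) (g i)⟫_ℂ‖ ^ 2)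
    (f : H) : Summable fun i => ‖⟪f, g i⟫_ℂ‖ ^ 2 := by
  rcases eq_or_ne f 0 with rfl | hf
  · simp
  have hS := summable_of_tsum_ne_zero ((mul_pos hc (by positivity)).trans_le (hlow f)).ne'
  refine hS.of_nonneg_of_le (fun _ => by positivity) fun i => ?_
  simpa [ht0, hT0] using Finset.single_le_sum (f := fun k => ‖⟪f, T (t k) (g i)⟫_ℂ‖ ^ 2)
    (fun k _ => sq_nonneg _) (Finset.mem_range.2 hn)

theorem summable_norm_inner_sq_of_integral_lower_bound [CompleteSpace H] [Countable I]
    (hCB : ∀ h : H, ∑' i, ‖⟪h, g i⟫_ℂ‖ ^ 2 ≤ CB * ‖h‖ ^ 2) (hT : ContinuousOn T (Icc 0 L))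
    (hT0 : T 0 = 1) (hL : 0 < L) {c : ℝ} (hc : 0 < c)
    (hlow : ∀ f, c * ‖f‖ ^ 2 ≤ ∑' i, ∫ s in (0 : ℝ)..L, ‖⟪f, T s (g i)⟫_ℂ‖ ^ 2) (f : H) :
    Summable fun i => ‖⟪f, g i⟫_ℂ‖ ^ 2 := by
  rcases eq_or_ne f 0 with rfl | hf
  · simp
  have hint : ∀ i, Integrable (fun s => ‖⟪f, T s (g i)⟫_ℂ‖ ^ 2) (volume.restrict (Ioo 0 L)) :=
    fun i => (((continuousOn_const.inner (hT.clm_apply continuousOn_const)).norm.pow 2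
      ).integrableOn_Icc).mono_set Ioo_subset_Icc_self
  have hsum : Summable fun i => ∫ s in Ioo 0 L, ‖‖⟪f, T s (g i)⟫_ℂ‖ ^ 2‖ := by
    refine (summable_of_tsum_ne_zero ((mul_pos hc (by positivity)).trans_le (hlow f)).ne').congr
      fun i => ?_
    simp [intervalIntegral.integral_of_le hL.le, integral_Ioc_eq_integral_Ioo]
  have hae : ∀ᵐ s ∂volume.restrict (Ioo 0 L),
      ((T s)†) f ∈ {h : H | Summable fun i => ‖⟪h, g i⟫_ℂ‖ ^ 2} := by
    filter_upwards [ae_summable_norm_of_summable_integral_norm hint hsum] with s hs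
    simpa [ContinuousLinearMap.adjoint_inner_left] using hs
  have htendsto : Tendsto (fun s => ((T s)†) f) (𝓝[Ioo 0 L] 0) (𝓝 f) := by
    have := ((ContinuousLinearMap.adjoint.continuous.comp_continuousOn hT).clm_apply
      (continuousOn_const (c := f))) 0 ⟨le_rfl, hL.le⟩
    simpa [hT0, ContinuousLinearMap.adjoint_one] using
      this.tendsto.mono_left (nhdsWithin_mono _ Ioo_subset_Icc_self)
  exact (isClosed_setOf_summable_norm_inner_sq hCB).mem_of_frequently_of_tendsto
    (frequently_nhdsWithin_Ioo_of_ae hL hae) htendsto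

theorem hasFrameBounds_tsum_integral_iff [CompleteSpace H] [Countable I]
    (hCB : ∀ h : H, ∑' i, ‖⟪h, g i⟫_ℂ‖ ^ 2 ≤ CB * ‖h‖ ^ 2) (hT : ContinuousOn T (Icc 0 L))
    (hT0 : T 0 = 1) (hL : 0 < L) :
    HasFrameBounds (fun f => ∑' i, ∫ s in (0 : ℝ)..L, ‖⟪f, T s (g i)⟫_ℂ‖ ^ 2) ↔
      ∃ (n : ℕ) (t : ℕ → ℝ), 1 ≤ n ∧ t 0 = 0 ∧ (∀ k, k + 1 < n → t k < t (k + 1)) ∧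
        t (n - 1) < L ∧
        HasFrameBounds (fun f => ∑' i, ∑ k ∈ Finset.range n, ‖⟪f, T (t k) (g i)⟫_ℂ‖ ^ 2) := by
  by_cases hG : ∀ h : H, Summable fun i => ‖⟪h, g i⟫_ℂ‖ ^ 2
  · simpa only [← tsum_integral_norm_inner_sq_eq hG hCB hT hL.le,
      ← tsum_sum_norm_inner_sq_eq hG hCB] using
      (hT.analysisOp_comp_adjoint hG hCB).hasFrameBounds_integral_iff hL
  -- Otherwise neither side holds, since either lower frame bound forces summability.
  refine iff_of_false (fun ⟨c, C, hc, _, hbd⟩ => hG ?_)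
    fun ⟨n, t, hn, ht0, _, _, c', C', hc', _, hbd⟩ => hG ?_
  · exact summable_norm_inner_sq_of_integral_lower_bound hCB hT hT0 hL hc fun f => (hbd f).1
  · exact summable_norm_inner_sq_of_sum_lower_bound hT0 hn ht0 hc' fun f => (hbd f).1

end Bessel

theorem spectrum_subset_slitPlane {A : Type*} [Ring A] [Algebra ℂ A] {a : A} (ha : IsUnit a)
    (h : ∀ z ∈ spectrum ℂ a, 0 ≤ z.re ∨ z.im ≠ 0) : spectrum ℂ a ⊆ Complex.slitPlane := by
  intro z hz
  have hz0 : z ≠ 0 := fun h0 => spectrum.zero_notMem ℂ ha (h0 ▸ hz)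
  rw [Complex.mem_slitPlane_iff]
  rcases h z hz with hre | him
  · by_cases him : z.im = 0
    · exact Or.inl (hre.lt_of_ne fun h0 => hz0 (Complex.ext h0.symm him))
    · exact Or.inr him
  · exact Or.inr him

theorem continuousOn_cfc_cpow_ofReal {A : Type*} [CStarAlgebra A] {a : A}
    (ha : spectrum ℂ a ⊆ Complex.slitPlane) {U : Set ℝ} (hU : IsCompact U) :
    ContinuousOn (fun s : ℝ => cfc (fun z : ℂ => z ^ (s : ℂ)) a) U := by
  have hF : ContinuousOn (fun p : ℝ × ℂ => p.2 ^ (p.1 : ℂ)) (U ×ˢ spectrum ℂ a) := fun p hp =>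
    ((continuousAt_cpow (ha hp.2)).comp (by fun_prop : Continuous fun q : ℝ × ℂ =>
      (q.2, (q.1 : ℂ))).continuousAt).continuousWithinAt
  have hUC := (hU.prod (spectrum.isCompact a)).uniformContinuousOn_of_continuous hF
  exact fun s hs => continuousWithinAt_cfc_fun (hUC.tendstoUniformlyOn hs)
    (Eventually.of_forall fun _ z hz => (continuousAt_cpow_const (ha hz)).continuousWithinAt)

/-- For an invertible bounded normal operator `A` (spectrum containing no negative real
number) and a Bessel family `(gᵢ)`, the system `{A^t gᵢ : i ∈ I, t ∈ [0,L]}` is a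
semi-continuous frame for `H` if and only if some finite time set
`0 = t₁ < t₂ < ⋯ < t_n < L` yields a discrete frame `{A^{t_k} gᵢ}`.
(Times are indexed here by `0, …, n-1`.) -/
theorem semicontinuous_frame_iff_exists_discrete_frame
    {H : Type*} [NormedAddCommGroup H] [InnerProductSpace ℂ H] [CompleteSpace H]
    (A : H →L[ℂ] H) (hA : IsStarNormal A) (hinv : IsUnit A)
    (hspec : ∀ z ∈ spectrum ℂ A, 0 ≤ z.re ∨ z.im ≠ 0)
    {I : Type*} [Countable I] (g : I → H)
    (hbessel : ∃ CB : ℝ, 0 < CB ∧ ∀ f : H, ∑' i : I, ‖⟪f, g i⟫_ℂ‖ ^ 2 ≤ CB * ‖f‖ ^ 2)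
    (L : ℝ) (hL : 0 < L) :
    (∃ c C : ℝ, 0 < c ∧ c ≤ C ∧ ∀ f : H,
      c * ‖f‖ ^ 2 ≤
          ∑' i : I, ∫ t in (0 : ℝ)..L, ‖⟪f, (cfc (fun z : ℂ => z ^ (t : ℂ)) A) (g i)⟫_ℂ‖ ^ 2 ∧
      ∑' i : I, ∫ t in (0 : ℝ)..L, ‖⟪f, (cfc (fun z : ℂ => z ^ (t : ℂ)) A) (g i)⟫_ℂ‖ ^ 2
          ≤ C * ‖f‖ ^ 2)
      ↔
    (∃ (n : ℕ) (t : ℕ → ℝ), 1 ≤ n ∧ t 0 = 0 ∧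
      (∀ k : ℕ, k + 1 < n → t k < t (k + 1)) ∧ t (n - 1) < L ∧
      ∃ c' C' : ℝ, 0 < c' ∧ c' ≤ C' ∧ ∀ f : H,
        c' * ‖f‖ ^ 2 ≤
            ∑' i : I, ∑ k ∈ Finset.range n,
              ‖⟪f, (cfc (fun z : ℂ => z ^ ((t k : ℝ) : ℂ)) A) (g i)⟫_ℂ‖ ^ 2 ∧
        ∑' i : I, ∑ k ∈ Finset.range n,
            ‖⟪f, (cfc (fun z : ℂ => z ^ ((t k : ℝ) : ℂ)) A) (g i)⟫_ℂ‖ ^ 2 ≤ C' * ‖f‖ ^ 2) := by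
  obtain ⟨CB, -, hCB⟩ := hbessel
  set T : ℝ → H →L[ℂ] H := fun s => cfc (fun z : ℂ => z ^ (s : ℂ)) A
  have hT : ContinuousOn T (Icc 0 L) :=
    continuousOn_cfc_cpow_ofReal (spectrum_subset_slitPlane hinv hspec) isCompact_Icc
  have hT0 : T 0 = 1 := by simpa [T] using cfc_const_one ℂ A
  exact hasFrameBounds_tsum_integral_iff hCB hT hT0 hL
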